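/- Let p, q > 0 satisfy 1/p + 1/q = 1. Define f : (0,1) → ℝ by f(s) = (s·log(ps) + (1−s)·log(q(1−s)))/(s − 1/p)² for s ≠ 1/p, and f(1/p) = pq/2 (the value making f continuous at s = 1/p). Then f is convex on the interval (0,1). -/

import Mathlib

/-!
Write `a = 1 / p` and `N` for the numerator. Then `N a = N' a = 0` and
`N'' t = 1 / t + 1 / (1 - t)`, so Taylor's formula with integral remainder gives
`f s = ∫₀¹ (1 - u) N'' (a + u (s - a)) du`, also at `s = a`, where the integral is
`N'' a / 2 = (p + q) / 2 = p q / 2`. For each `u` the integrand is a nonnegative multiple of the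
convex function `N''` composed with an affine map of `s`, so `f` is an average of convex functions.
-/

open Real Set AffineMap MeasureTheory

theorem ConvexOn.comp_lineMap_of_mem {𝕜 E β : Type*} [Field 𝕜] [LinearOrder 𝕜]
    [IsStrictOrderedRing 𝕜] [AddCommGroup E] [Module 𝕜 E] [AddCommMonoid β] [PartialOrder β]
    [SMul 𝕜 β] {S : Set E} {f : E → β} (hf : ConvexOn 𝕜 S f) {a : E} (ha : a ∈ S) {u : 𝕜}
    (hu : u ∈ Icc 0 1) : ConvexOn 𝕜 S fun s => f (lineMap a s u) := by
  have hmaps : S ⊆ homothety a u ⁻¹' S := fun s hs => by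
    simpa only [mem_preimage, homothety_eq_lineMap] using hf.1.lineMap_mem ha hs hu
  simpa only [Function.comp_def, homothety_eq_lineMap] using
    (hf.comp_affineMap (homothety a u)).subset hmaps hf.1

theorem convexOn_integral {α E : Type*} [MeasurableSpace α] {μ : Measure α} [AddCommGroup E]
    [Module ℝ E] {S : Set E} {F : α → E → ℝ} (hS : Convex ℝ S)
    (hF : ∀ᵐ u ∂μ, ConvexOn ℝ S (F u)) (hint : ∀ x ∈ S, Integrable (F · x) μ) :
    ConvexOn ℝ S fun x => ∫ u, F u x ∂μ := by
  refine ⟨hS, fun x hx y hy b c hb hc hbc => ?_⟩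
  simp only [smul_eq_mul]
  rw [← integral_const_mul, ← integral_const_mul,
    ← integral_add ((hint x hx).const_mul b) ((hint y hy).const_mul c)]
  refine integral_mono_ae (hint _ (hS hx hy hb hc hbc))
    (((hint x hx).const_mul b).add ((hint y hy).const_mul c)) ?_
  filter_upwards [hF] with u hu
  exact hu.2 hx hy hb hc hbc

theorem lineMap_mem_uIcc {a s u : ℝ} (hu : u ∈ uIcc 0 1) : lineMap a s u ∈ uIcc a s :=
  (convex_uIcc a s).lineMap_mem left_mem_uIcc right_mem_uIcc
    (by rwa [uIcc_of_le zero_le_one] at hu)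

theorem intervalIntegrable_one_sub_mul_comp_lineMap {g : ℝ → ℝ} {a s : ℝ}
    (hg : ContinuousOn g (uIcc a s)) :
    IntervalIntegrable (fun u => (1 - u) * g (lineMap a s u)) volume 0 1 := by
  refine ContinuousOn.intervalIntegrable ?_
  refine (continuousOn_const.sub continuousOn_id).mul (hg.comp ?_ fun u hu => lineMap_mem_uIcc hu)
  exact (AffineMap.lineMap_continuous).continuousOn

theorem taylor_integral_remainder_lineMap {f f' f'' : ℝ → ℝ} {a s : ℝ}
    (hf : ∀ t ∈ uIcc a s, HasDerivAt f (f' t) t)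
    (hf' : ∀ t ∈ uIcc a s, HasDerivAt f' (f'' t) t) (hf'' : ContinuousOn f'' (uIcc a s)) :
    f s - f a - (s - a) * f' a =
      (s - a) ^ 2 * ∫ u in (0 : ℝ)..1, (1 - u) * f'' (lineMap a s u) := by
  have hderiv : ∀ u ∈ uIcc (0 : ℝ) 1, HasDerivAt
      (fun u => f (lineMap a s u) + (1 - u) * (s - a) * f' (lineMap a s u))
      ((s - a) ^ 2 * ((1 - u) * f'' (lineMap a s u))) u := by
    intro u hu
    have hl : HasDerivAt (lineMap a s) (s - a) u := hasDerivAt_lineMap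
    have h1 : HasDerivAt (fun u => f (lineMap a s u)) (f' (lineMap a s u) * (s - a)) u :=
      (hf _ (lineMap_mem_uIcc hu)).comp u hl
    have h2 : HasDerivAt (fun u => f' (lineMap a s u)) (f'' (lineMap a s u) * (s - a)) u :=
      (hf' _ (lineMap_mem_uIcc hu)).comp u hl
    refine (h1.add (((hasDerivAt_id' u).const_sub 1).mul_const (s - a) |>.mul h2)).congr_deriv ?_
    ring
  rw [← intervalIntegral.integral_const_mul, intervalIntegral.integral_eq_sub_of_hasDerivAt hderiv
    ((intervalIntegrable_one_sub_mul_comp_lineMap hf'').const_mul _)]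
  simp only [lineMap_apply_one, lineMap_apply_zero]
  ring

theorem convexOn_integral_one_sub_mul_comp_lineMap {S : Set ℝ} {g : ℝ → ℝ} (hg : ConvexOn ℝ S g)
    (hgc : ContinuousOn g S) {a : ℝ} (ha : a ∈ S) :
    ConvexOn ℝ S fun s => ∫ u in (0 : ℝ)..1, (1 - u) * g (lineMap a s u) := by
  simp only [intervalIntegral.integral_of_le zero_le_one]
  refine convexOn_integral hg.1
    ((ae_restrict_iff' measurableSet_Ioc).2 (.of_forall fun u hu => ?_)) fun s hs =>
      (intervalIntegrable_one_sub_mul_comp_lineMap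
        (hgc.mono (hg.1.ordConnected.uIcc_subset ha hs))).1
  simpa only [smul_eq_mul] using
    (hg.comp_lineMap_of_mem ha (Ioc_subset_Icc_self hu)).smul (sub_nonneg.2 hu.2)

theorem convexOn_inv_add_inv_one_sub : ConvexOn ℝ (Ioo 0 1) fun t : ℝ => t⁻¹ + (1 - t)⁻¹ := by
  have hinv : ConvexOn ℝ (Ioi 0) fun t : ℝ => t⁻¹ := by simpa using convexOn_zpow (𝕜 := ℝ) (-1)
  have hreflect : Ioo (0 : ℝ) 1 ⊆ (lineMap 1 0 : ℝ →ᵃ[ℝ] ℝ) ⁻¹' Ioi 0 := fun t ht => by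
    simp [lineMap_apply_ring', ht.2]
  refine (hinv.subset Ioo_subset_Ioi_self (convex_Ioo 0 1)).add ?_
  simpa [Function.comp_def, lineMap_apply_ring] using
    (hinv.comp_affineMap _).subset hreflect (convex_Ioo 0 1)

theorem continuousOn_inv_add_inv_one_sub :
    ContinuousOn (fun t : ℝ => t⁻¹ + (1 - t)⁻¹) (Ioo 0 1) := by
  fun_prop (disch := grind)

-- The Kullback–Leibler divergence of Bernoulli(`s`) from Bernoulli(`1 / p`) if `1 / p + 1 / q = 1`.
noncomputable def bernoulliKL (p q s : ℝ) : ℝ := s * log (p * s) + (1 - s) * log (q * (1 - s))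

theorem hasDerivAt_bernoulliKL {p q t : ℝ} (hp : p ≠ 0) (hq : q ≠ 0) (ht₀ : t ≠ 0) (ht₁ : t ≠ 1) :
    HasDerivAt (bernoulliKL p q) (log (p * t) - log (q * (1 - t))) t := by
  have h1t : 1 - t ≠ 0 := sub_ne_zero.2 ht₁.symm
  have hl₁ : HasDerivAt (fun t => log (p * t)) (p * 1 / (p * t)) t :=
    ((hasDerivAt_id' t).const_mul p).log (mul_ne_zero hp ht₀)
  have hl₂ : HasDerivAt (fun t => log (q * (1 - t))) (q * -1 / (q * (1 - t))) t :=
    (((hasDerivAt_id' t).const_sub 1).const_mul q).log (mul_ne_zero hq h1t)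
  refine (((hasDerivAt_id' t).mul hl₁).add
    (((hasDerivAt_id' t).const_sub 1).mul hl₂)).congr_deriv ?_
  field_simp
  ring

theorem hasDerivAt_log_mul_sub_log_mul {p q t : ℝ} (hp : p ≠ 0) (hq : q ≠ 0) (ht₀ : t ≠ 0)
    (ht₁ : t ≠ 1) :
    HasDerivAt (fun t => log (p * t) - log (q * (1 - t))) (t⁻¹ + (1 - t)⁻¹) t := by
  have h1t : 1 - t ≠ 0 := sub_ne_zero.2 ht₁.symm
  refine ((((hasDerivAt_id' t).const_mul p).log (mul_ne_zero hp ht₀)).sub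
    ((((hasDerivAt_id' t).const_sub 1).const_mul q).log (mul_ne_zero hq h1t))).congr_deriv ?_
  field_simp
  ring

theorem one_div_mem_Ioo_of_one_div_add_one_div_eq_one {p q : ℝ} (hp : 0 < p) (hq : 0 < q)
    (hpq : 1 / p + 1 / q = 1) : 1 / p ∈ Ioo (0 : ℝ) 1 :=
  ⟨by positivity, by linarith [one_div_pos.2 hq]⟩

theorem bernoulliKL_eq_sq_mul_integral {p q s : ℝ} (hp : 0 < p) (hq : 0 < q)
    (hpq : 1 / p + 1 / q = 1) (hs : s ∈ Ioo 0 1) :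
    bernoulliKL p q s = (s - 1 / p) ^ 2 *
      ∫ u in (0 : ℝ)..1, (1 - u) * ((lineMap (1 / p) s u)⁻¹ + (1 - lineMap (1 / p) s u)⁻¹) := by
  have hsub : uIcc (1 / p) s ⊆ Ioo 0 1 :=
    ordConnected_Ioo.uIcc_subset (one_div_mem_Ioo_of_one_div_add_one_div_eq_one hp hq hpq) hs
  have hq' : q * (1 - p⁻¹) = 1 := by rw [← one_div, ← eq_sub_of_add_eq' hpq]; field_simp
  have hTaylor := taylor_integral_remainder_lineMap (f := bernoulliKL p q)
    (fun t ht => hasDerivAt_bernoulliKL hp.ne' hq.ne' (hsub ht).1.ne' (hsub ht).2.ne)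
    (fun t ht => hasDerivAt_log_mul_sub_log_mul hp.ne' hq.ne' (hsub ht).1.ne' (hsub ht).2.ne)
    (continuousOn_inv_add_inv_one_sub.mono hsub)
  simpa [bernoulliKL, hp.ne', hq'] using hTaylor

theorem stmt16 (p q : ℝ) (hp : 0 < p) (hq : 0 < q) (hpq : 1 / p + 1 / q = 1) :
    ConvexOn ℝ (Set.Ioo (0 : ℝ) 1) (fun s : ℝ =>
      if s = 1 / p then p * q / 2
      else (s * Real.log (p * s) + (1 - s) * Real.log (q * (1 - s))) / (s - 1 / p) ^ 2) := by
  refine (convexOn_integral_one_sub_mul_comp_lineMap convexOn_inv_add_inv_one_sub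
    continuousOn_inv_add_inv_one_sub
    (one_div_mem_Ioo_of_one_div_add_one_div_eq_one hp hq hpq)).congr fun s hs => ?_
  split_ifs with hsa
  · have hq' : (1 - 1 / p)⁻¹ = q := by rw [← eq_sub_of_add_eq' hpq, one_div, inv_inv]
    have hpq' : p + q = p * q := by field_simp at hpq; linarith
    have hmean : ∫ u in (0 : ℝ)..1, (1 - u) = 1 / 2 := by
      rw [intervalIntegral.integral_sub intervalIntegrable_const
        intervalIntegral.intervalIntegrable_id]
      norm_num
    rw [hsa]
    simp only [lineMap_same_apply, intervalIntegral.integral_mul_const, hmean, hq', inv_div,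
      div_one]
    linear_combination hpq' / 2
  · rw [← bernoulliKL, bernoulliKL_eq_sq_mul_integral hp hq hpq hs,
      mul_div_cancel_left₀ _ (pow_ne_zero 2 (sub_ne_zero.2 hsa))]
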